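/- Let F be a perfect field and let f : X → Y be a universal homeomorphism between separated F-schemes of finite type (f a morphism of F-schemes). Then the induced map X(F) → Y(F) on F-rational points is a bijection. -/

import Mathlib

/-!
A universal homeomorphism is surjective and universally injective, so its residue field
extensions are purely inseparable. A purely inseparable extension `κ(f x) → κ(x)` has exactly
one extension of any embedding `κ(f x) → F` into a perfect field `F`, so every `F`-point of `Y`
lifts uniquely to an `F`-point of `X`.
-/

open CategoryTheory AlgebraicGeometry CategoryTheory.Limits

def IsUniversalHomeomorphism {X Y : Scheme} (f : X ⟶ Y) : Prop :=
  (AlgebraicGeometry.topologically @IsHomeomorph).universally f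

universe u

namespace IsUniversalHomeomorphism

variable {X Y : Scheme.{u}} {f : X ⟶ Y}

lemma universallyInjective (hf : IsUniversalHomeomorphism f) : UniversallyInjective f :=
  ⟨MorphismProperty.universally_mono (fun _ _ _ h ↦ h.injective) _ hf⟩

lemma surjective (hf : IsUniversalHomeomorphism f) : Surjective f :=
  ⟨(MorphismProperty.universally_le _ _ hf).surjective⟩

end IsUniversalHomeomorphism

namespace AlgebraicGeometry

theorem UniversallyInjective.bijective_comp_of_perfectField {X Y : Scheme.{u}} (f : X ⟶ Y)
    [UniversallyInjective f] [Surjective f] (K : Type u) [Field K] [PerfectField K] :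
    Function.Bijective fun g : Spec (.of K) ⟶ X ↦ g ≫ f := by
  have htfae := tfae_universallyInjective f
  have hinj : ∀ (L : Type u) [Field L], Function.Injective fun g : Spec (.of L) ⟶ X ↦ g ≫ f :=
    (htfae.out 0 1).mp ‹_›
  have hradicial := (htfae.out 0 2).mp ‹_›
  refine ⟨hinj K, fun b ↦ ?_⟩
  obtain ⟨⟨y, ψ⟩, rfl⟩ := (Y.SpecToEquivOfField K).symm.surjective b
  obtain ⟨x, rfl⟩ := f.surjective y
  have hinsep := hradicial.2 x
  algebraize [(f.residueFieldMap x).hom]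
  obtain ⟨φ, hφ⟩ := (IsPurelyInseparable.bijective_comp_algebraMap
    (Y.residueField (f x)) (X.residueField x) K).2 ψ.hom
  refine ⟨Spec.map (CommRingCat.ofHom φ) ≫ X.fromSpecResidueField x, ?_⟩
  have hψ : f.residueFieldMap x ≫ CommRingCat.ofHom φ = ψ := CommRingCat.hom_ext hφ
  simp only [Scheme.SpecToEquivOfField_symm_apply, Category.assoc,
    ← Scheme.Hom.SpecMap_residueFieldMap_fromSpecResidueField, ← Spec.map_comp_assoc]
  exact congr(Spec.map $hψ ≫ _)

end AlgebraicGeometry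

/-- if `F` is a perfect field and `f : X ⟶ Y` a universal homeomorphism
between separated `F`-schemes of finite type (a morphism of `F`-schemes), then composition
with `f` is a bijection
from the set `X(F)` of `F`-rational points of `X` to the set `Y(F)` of `F`-rational
points of `Y`. -/
theorem statement4 (F : Type) [Field F] [PerfectField F]
    (X Y : Scheme)
    (sX : X ⟶ Spec (CommRingCat.of F)) (sY : Y ⟶ Spec (CommRingCat.of F))
    (f : X ⟶ Y) (hf : f ≫ sY = sX)
    (huniv : IsUniversalHomeomorphism f) :
    Function.Bijective
      (fun a : {a : Spec (CommRingCat.of F) ⟶ X // a ≫ sX = 𝟙 _} =>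
        (⟨a.1 ≫ f, by rw [Category.assoc, hf, a.2]⟩ :
          {b : Spec (CommRingCat.of F) ⟶ Y // b ≫ sY = 𝟙 _})) := by
  have := huniv.universallyInjective
  have := huniv.surjective
  obtain ⟨hinj, hsurj⟩ := UniversallyInjective.bijective_comp_of_perfectField f F
  refine ⟨fun a a' h ↦ Subtype.ext (hinj congr($h.1)), fun ⟨b, hb⟩ ↦ ?_⟩
  obtain ⟨a, rfl⟩ := hsurj b
  exact ⟨⟨a, by rw [← hf, ← Category.assoc, hb]⟩, rfl⟩
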